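/- arXiv:1605.08940 — 2 statements merged into one kernel-verified Lean document; each statement's English description precedes it below -/
import Mathlib

section
/- Let V, W, Z be compact spaces and let {μ_w : w ∈ W} be a CSM of strictly positive Borel probability measures on a continuous map π : V → W. Suppose (f_n) and (g_n) are sequences in 𝓛(V,Z) with f_n, g_n ∈ L(π⁻¹(w_n), Z) for a common sequence (w_n) in W, converging in 𝓛(V,Z) to f and g respectively, where f, g ∈ L(π⁻¹(w), Z). Then the sequence of paired functions v ↦ (f_n(v), g_n(v)), viewed as elements of L(π⁻¹(w_n), Z×Z) ⊆ 𝓛(V, Z×Z), converges in 𝓛(V, Z×Z) to the function v ↦ (f(v), g(v)) ∈ L(π⁻¹(w), Z×Z). -/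
open MeasureTheory

/-- A representative for an element of `𝓛(V,Z)`: a base point `w : W` together with a Borel
measurable function, considered (via the measure `μ w`, concentrated on the fibre `π⁻¹(w)`) as
a function on the fibre over `w`. -/
structure LRaw (V W Z : Type*) [MeasurableSpace V] [MeasurableSpace Z] where
  base : W
  toFun : V → Z
  meas : Measurable toFun

/-- Two representatives are identified when they have the same base point and agree
`μ w`-almost everywhere. -/
def lSetoid (V W Z : Type*) [MeasurableSpace V] [MeasurableSpace Z]
    (μ : W → Measure V) : Setoid (LRaw V W Z) where
  r f g := f.base = g.base ∧ f.toFun =ᵐ[μ f.base] g.toFun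
  iseqv := by
    refine ⟨fun f => ⟨rfl, Filter.EventuallyEq.rfl⟩, ?_, ?_⟩
    · rintro f g ⟨h1, h2⟩
      refine ⟨h1.symm, ?_⟩
      rw [← h1]
      exact h2.symm
    · rintro f g h ⟨h1, h2⟩ ⟨h3, h4⟩
      refine ⟨h1.trans h3, h2.trans ?_⟩
      rw [h1]
      exact h4

/-- The space `𝓛(V,Z) = ⋃_{w ∈ W} L(π⁻¹(w), Z)`: measurable functions on the fibres, modulo
almost-everywhere equality. -/
def LSpace (V W Z : Type*) [MeasurableSpace V] [MeasurableSpace Z]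
    (μ : W → Measure V) : Type _ :=
  Quotient (lSetoid V W Z μ)

/-- The projection `π̃ : 𝓛(V,Z) → W`. -/
def LSpace.proj (V W Z : Type*) [MeasurableSpace V] [MeasurableSpace Z]
    (μ : W → Measure V) : LSpace V W Z μ → W :=
  Quotient.lift (fun f => f.base) (fun _ _ h => h.1)

/-- The test functions `φ_{F₁,F₂} : f ↦ ∫_{π⁻¹(π̃ f)} F₁(f v) F₂(v) dμ_{π̃ f}(v)` generating
the topology of `𝓛(V,Z)`. -/
noncomputable def lPhi (V W Z : Type*) [TopologicalSpace V] [MeasurableSpace V]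
    [TopologicalSpace Z] [MeasurableSpace Z] (μ : W → Measure V)
    (F₁ : C(Z, ℂ)) (F₂ : C(V, ℂ)) : LSpace V W Z μ → ℂ :=
  Quotient.lift (fun f => ∫ v, F₁ (f.toFun v) * F₂ v ∂(μ f.base))
    (by
      rintro f g ⟨h1, h2⟩
      show ∫ v, F₁ (f.toFun v) * F₂ v ∂(μ f.base) = ∫ v, F₁ (g.toFun v) * F₂ v ∂(μ g.base)
      rw [h1] at h2 ⊢
      exact integral_congr_ae (h2.mono fun v hv => by simp only []; rw [hv]))

/-- The topology of `𝓛(V,Z)`: the coarsest topology making all the functions `φ_{F₁,F₂}`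
continuous, for `F₁ : Z → ℂ` and `F₂ : V → ℂ` continuous. -/
noncomputable def lTop (V W Z : Type*) [TopologicalSpace V] [MeasurableSpace V]
    [TopologicalSpace Z] [MeasurableSpace Z] (μ : W → Measure V) :
    TopologicalSpace (LSpace V W Z μ) :=
  ⨅ (F₁ : C(Z, ℂ)) (F₂ : C(V, ℂ)),
    TopologicalSpace.induced (lPhi V W Z μ F₁ F₂) inferInstance

section
variable {V W Z : Type*}
    [TopologicalSpace V] [MeasurableSpace V]
    [TopologicalSpace Z] [MeasurableSpace Z]
    (μ : W → Measure V)

theorem lTendsto_iff (u : ℕ → LSpace V W Z μ) (x : LSpace V W Z μ) :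
    Filter.Tendsto u Filter.atTop (@nhds _ (lTop V W Z μ) x) ↔
      ∀ (F₁ : C(Z, ℂ)) (F₂ : C(V, ℂ)),
        Filter.Tendsto (fun n => lPhi V W Z μ F₁ F₂ (u n)) Filter.atTop
          (nhds (lPhi V W Z μ F₁ F₂ x)) := by
  unfold lTop
  simp only [_root_.nhds_iInf, nhds_induced, Filter.tendsto_iInf, Filter.tendsto_comap_iff]
  rfl

theorem lPhi_mk (F₁ : C(Z, ℂ)) (F₂ : C(V, ℂ)) (w : W) (f : V → Z) (hf : Measurable f) :
    lPhi V W Z μ F₁ F₂ (Quotient.mk (lSetoid V W Z μ) ⟨w, f, hf⟩) =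
      ∫ v, F₁ (f v) * F₂ v ∂(μ w) := rfl

end

theorem integrable_of_bdd {V : Type*} [MeasurableSpace V] {μ : MeasureTheory.Measure V}
    [MeasureTheory.IsFiniteMeasure μ] {φ : V → ℂ} (hm : MeasureTheory.AEStronglyMeasurable φ μ)
    (C : ℝ) (hb : ∀ v, ‖φ v‖ ≤ C) : MeasureTheory.Integrable φ μ :=
  ⟨hm, MeasureTheory.HasFiniteIntegral.of_bounded (Filter.Eventually.of_forall hb)⟩
open Filter in
theorem integral_comp_proj {V W : Type*} [MeasurableSpace V]
    (π : V → W) (μ : W → Measure V)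
    (hprob : ∀ w : W, IsProbabilityMeasure (μ w))
    (hconc : ∀ w : W, μ w ((π ⁻¹' ({w} : Set W))ᶜ) = 0)
    (φ : W → ℂ) (w : W) : ∫ v, φ (π v) ∂(μ w) = φ w := by
  haveI := hprob w
  have hae : ∀ᵐ v ∂(μ w), π v = w := by
    rw [MeasureTheory.ae_iff]
    have : {v | ¬ π v = w} = (π ⁻¹' ({w} : Set W))ᶜ := by
      ext v; simp [Set.mem_preimage]
    rw [this]
    exact hconc w
  rw [MeasureTheory.integral_congr_ae (hae.mono fun v hv => by rw [hv])]
  simp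

open Filter in
theorem tendsto_of_continuous_tendsto {W : Type*} [TopologicalSpace W] [CompactSpace W]
    [T2Space W] [SecondCountableTopology W] (wn : ℕ → W) (w₀ : W)
    (h : ∀ φ : C(W, ℝ), Tendsto (fun n => φ (wn n)) atTop (nhds (φ w₀))) :
    Tendsto wn atTop (nhds w₀) := by
  letI : MetricSpace W := TopologicalSpace.metrizableSpaceMetric W
  have := h ⟨fun w' => dist w' w₀, continuous_id.dist continuous_const⟩
  simp only [ContinuousMap.coe_mk, dist_self] at this
  exact tendsto_iff_dist_tendsto_zero.mpr this
open Filter ComplexConjugate in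
theorem integral_normSq_expand {V : Type*} [MeasurableSpace V] (μ : Measure V)
    [IsProbabilityMeasure μ] (p : V → ℂ) (hp : Measurable p) (Cp : ℝ)
    (hCp : ∀ v, ‖p v‖ ≤ Cp) (h : V → ℂ) (hh : Measurable h) (Ch : ℝ)
    (hCh : ∀ v, ‖h v‖ ≤ Ch) :
    ((∫ v, ‖p v - h v‖ ^ 2 ∂μ : ℝ) : ℂ) =
      ∫ v, p v * conj (p v) ∂μ - ∫ v, p v * conj (h v) ∂μ
        - ∫ v, conj (p v) * h v ∂μ + ∫ v, h v * conj (h v) ∂μ := by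
  have hconj : Measurable (fun z : ℂ => conj z) := continuous_star.measurable
  have i1 : Integrable (fun v => p v * conj (p v)) μ :=
    integrable_of_bdd ((hp.mul (hconj.comp hp)).aestronglyMeasurable) (Cp * Cp)
      (fun v => by rw [norm_mul, RCLike.norm_conj]
                   exact mul_le_mul (hCp v) (hCp v) (norm_nonneg _)
                     ((norm_nonneg _).trans (hCp v)))
  have i2 : Integrable (fun v => p v * conj (h v)) μ :=
    integrable_of_bdd ((hp.mul (hconj.comp hh)).aestronglyMeasurable) (Cp * Ch)
      (fun v => by rw [norm_mul, RCLike.norm_conj]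
                   exact mul_le_mul (hCp v) (hCh v) (norm_nonneg _)
                     ((norm_nonneg _).trans (hCp v)))
  have i3 : Integrable (fun v => conj (p v) * h v) μ :=
    integrable_of_bdd (((hconj.comp hp).mul hh).aestronglyMeasurable) (Cp * Ch)
      (fun v => by rw [norm_mul, RCLike.norm_conj]
                   exact mul_le_mul (hCp v) (hCh v) (norm_nonneg _)
                     ((norm_nonneg _).trans (hCp v)))
  have i4 : Integrable (fun v => h v * conj (h v)) μ :=
    integrable_of_bdd ((hh.mul (hconj.comp hh)).aestronglyMeasurable) (Ch * Ch)
      (fun v => by rw [norm_mul, RCLike.norm_conj]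
                   exact mul_le_mul (hCh v) (hCh v) (norm_nonneg _)
                     ((norm_nonneg _).trans (hCh v)))
  have key : ∀ v, ((‖p v - h v‖ ^ 2 : ℝ) : ℂ) =
      p v * conj (p v) - p v * conj (h v) - conj (p v) * h v + h v * conj (h v) := by
    intro v
    have : ((‖p v - h v‖ ^ 2 : ℝ) : ℂ) = (p v - h v) * conj (p v - h v) := by
      rw [Complex.mul_conj, Complex.normSq_eq_norm_sq]
    rw [this, map_sub]; ring
  calc ((∫ v, ‖p v - h v‖ ^ 2 ∂μ : ℝ) : ℂ)
      = ∫ v, ((‖p v - h v‖ ^ 2 : ℝ) : ℂ) ∂μ := (integral_ofReal).symm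
    _ = ∫ v, (p v * conj (p v) - p v * conj (h v) - conj (p v) * h v
          + h v * conj (h v)) ∂μ := by
        exact integral_congr_ae (Filter.Eventually.of_forall fun v => key v)
    _ = _ := by
        have i12 : Integrable (fun v => p v * conj (p v) - p v * conj (h v)) μ := i1.sub i2
        have i123 : Integrable (fun v => p v * conj (p v) - p v * conj (h v)
          - conj (p v) * h v) μ := i12.sub i3
        rw [integral_add i123 i4, integral_sub i12 i3, integral_sub i1 i2]
open Filter ComplexConjugate in
theorem tendsto_integral_normSq
    {V W Z : Type*}
    [TopologicalSpace V] [CompactSpace V] [MeasurableSpace V] [BorelSpace V]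
    [TopologicalSpace Z] [CompactSpace Z] [MeasurableSpace Z] [BorelSpace Z]
    [TopologicalSpace W]
    (μ : W → Measure V) (hprob : ∀ w : W, IsProbabilityMeasure (μ w))
    (hcont : ∀ F : C(V, ℂ), Continuous fun w : W => ∫ v, F v ∂(μ w))
    (wn : ℕ → W) (w₀ : W) (hw : Tendsto wn atTop (nhds w₀))
    (fn : ℕ → V → Z) (hfn : ∀ n, Measurable (fn n)) (f : V → Z) (hf : Measurable f)
    (hF : ∀ (F₁ : C(Z, ℂ)) (F₂ : C(V, ℂ)),
      Tendsto (fun n => ∫ v, F₁ (fn n v) * F₂ v ∂(μ (wn n))) atTop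
        (nhds (∫ v, F₁ (f v) * F₂ v ∂(μ w₀))))
    (G : C(Z, ℂ)) (h : C(V, ℂ)) :
    Tendsto (fun n => ∫ v, ‖G (fn n v) - h v‖ ^ 2 ∂(μ (wn n))) atTop
      (nhds (∫ v, ‖G (f v) - h v‖ ^ 2 ∂(μ w₀))) := by
  have hGm : Continuous (fun z : Z => conj (G z)) := continuous_star.comp G.continuous
  have hhm : Continuous (fun v : V => conj (h v)) := continuous_star.comp h.continuous
  -- the four complex limits
  have T1 := hF (G * ⟨fun z => conj (G z), hGm⟩) 1
  have T2 := hF G ⟨fun v => conj (h v), hhm⟩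
  have T3 := hF ⟨fun z => conj (G z), hGm⟩ h
  have T4 : Tendsto (fun n => ∫ v, h v * conj (h v) ∂(μ (wn n))) atTop
      (nhds (∫ v, h v * conj (h v) ∂(μ w₀))) :=
    ((hcont ⟨fun v => h v * conj (h v), h.continuous.mul hhm⟩).tendsto w₀).comp hw
  simp only [ContinuousMap.mul_apply, ContinuousMap.coe_mk, ContinuousMap.one_apply,
    mul_one] at T1 T2 T3
  have Tc : Tendsto (fun n => ((∫ v, ‖G (fn n v) - h v‖ ^ 2 ∂(μ (wn n)) : ℝ) : ℂ)) atTop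
      (nhds ((∫ v, ‖G (f v) - h v‖ ^ 2 ∂(μ w₀) : ℝ) : ℂ)) := by
    have expand : ∀ (w : W) (u : V → Z), Measurable u →
        ((∫ v, ‖G (u v) - h v‖ ^ 2 ∂(μ w) : ℝ) : ℂ) =
          ∫ v, G (u v) * conj (G (u v)) ∂(μ w) - ∫ v, G (u v) * conj (h v) ∂(μ w)
            - ∫ v, conj (G (u v)) * h v ∂(μ w) + ∫ v, h v * conj (h v) ∂(μ w) := by
      intro w u hu
      haveI := hprob w
      exact integral_normSq_expand (μ w) (fun v => G (u v))
        (G.continuous.measurable.comp hu) ‖G‖ (fun v => G.norm_coe_le_norm (u v))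
        (fun v => h v) h.continuous.measurable ‖h‖ (fun v => h.norm_coe_le_norm v)
    simp only [fun n => expand (wn n) (fn n) (hfn n), expand w₀ f hf]
    exact (((T1.sub T2).sub T3).add T4)
  have := (Complex.continuous_re.tendsto _).comp Tc
  simpa [Function.comp_def] using this
open Filter in
theorem integral_norm_le_amgm {V : Type*} [MeasurableSpace V] (μ : Measure V)
    [IsProbabilityMeasure μ] (u : V → ℂ) (hm : AEStronglyMeasurable u μ)
    (C : ℝ) (hb : ∀ v, ‖u v‖ ≤ C) {δ : ℝ} (hδ : 0 < δ) :
    ∫ v, ‖u v‖ ∂μ ≤ δ / 2 + (∫ v, ‖u v‖ ^ 2 ∂μ) / (2 * δ) := by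
  have i_norm : Integrable (fun v => ‖u v‖) μ :=
    ⟨hm.norm, HasFiniteIntegral.of_bounded (C := C)
      (Filter.Eventually.of_forall fun v => by
        simpa [Real.norm_eq_abs, abs_of_nonneg (norm_nonneg (u v))] using hb v)⟩
  have i_sq : Integrable (fun v => ‖u v‖ ^ 2) μ :=
    ⟨(hm.norm.pow 2), HasFiniteIntegral.of_bounded (C := C ^ 2)
      (Filter.Eventually.of_forall fun v => by
        have h1 := norm_nonneg (u v); have h2 := hb v
        rw [Real.norm_eq_abs, abs_of_nonneg (by positivity)]
        nlinarith)⟩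
  have pointwise : ∀ v, ‖u v‖ ≤ δ / 2 + ‖u v‖ ^ 2 / (2 * δ) := by
    intro v
    rw [div_add_div _ _ (two_ne_zero) (by positivity), le_div_iff₀ (by positivity)]
    nlinarith [sq_nonneg (δ - ‖u v‖)]
  calc ∫ v, ‖u v‖ ∂μ ≤ ∫ v, (δ / 2 + ‖u v‖ ^ 2 / (2 * δ)) ∂μ :=
        integral_mono i_norm ((integrable_const _).add (i_sq.div_const _))
          fun v => pointwise v
    _ = δ / 2 + (∫ v, ‖u v‖ ^ 2 ∂μ) / (2 * δ) := by
        rw [integral_add (integrable_const _) (i_sq.div_const _), integral_const,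
          probReal_univ, integral_div]
        simp

theorem tri_bound {a b c A B C : ℝ} (ha : 0 ≤ a) (hb : 0 ≤ b) (hc : 0 ≤ c)
    (hA : a ≤ A) (hB : b ≤ B) (hC : c ≤ C) : a * b * c ≤ A * B * C := by
  have h1 : 0 ≤ A := ha.trans hA
  have h2 : 0 ≤ B := hb.trans hB
  exact mul_le_mul (mul_le_mul hA hB hb h1) hC hc (by positivity)

open Filter in
theorem norm_integral_diff_le {V : Type*} [MeasurableSpace V] (μ : Measure V)
    [IsProbabilityMeasure μ] (p q h h' F₂ : V → ℂ)
    (hp : Measurable p) (hq : Measurable q) (hh : Measurable h) (hh' : Measurable h')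
    (hF₂ : Measurable F₂)
    (Cp Mq Kh Ch' K : ℝ)
    (hbp : ∀ v, ‖p v‖ ≤ Cp) (hbq : ∀ v, ‖q v‖ ≤ Mq) (hbh : ∀ v, ‖h v‖ ≤ Kh)
    (hbh' : ∀ v, ‖h' v‖ ≤ Ch') (hbF₂ : ∀ v, ‖F₂ v‖ ≤ K)
    (hMq : 0 ≤ Mq) (hKh : 0 ≤ Kh) (hK : 0 ≤ K) :
    ‖(∫ v, p v * q v * F₂ v ∂μ) - ∫ v, h v * h' v * F₂ v ∂μ‖ ≤
      Mq * K * ∫ v, ‖p v - h v‖ ∂μ + Kh * K * ∫ v, ‖q v - h' v‖ ∂μ := by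
  have i1 : Integrable (fun v => p v * q v * F₂ v) μ :=
    integrable_of_bdd ((hp.mul hq).mul hF₂).aestronglyMeasurable (Cp * Mq * K)
      (fun v => by
        rw [norm_mul, norm_mul]
        exact tri_bound (norm_nonneg _) (norm_nonneg _) (norm_nonneg _)
          (hbp v) (hbq v) (hbF₂ v))
  have i2 : Integrable (fun v => h v * h' v * F₂ v) μ :=
    integrable_of_bdd ((hh.mul hh').mul hF₂).aestronglyMeasurable (Kh * Ch' * K)
      (fun v => by
        rw [norm_mul, norm_mul]
        exact tri_bound (norm_nonneg _) (norm_nonneg _) (norm_nonneg _)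
          (hbh v) (hbh' v) (hbF₂ v))
  have iph : Integrable (fun v => ‖p v - h v‖) μ :=
    ((integrable_of_bdd (hp.sub hh).aestronglyMeasurable (Cp + Kh)
      (fun v => (norm_sub_le _ _).trans (add_le_add (hbp v) (hbh v)))).norm)
  have iqh : Integrable (fun v => ‖q v - h' v‖) μ :=
    ((integrable_of_bdd (hq.sub hh').aestronglyMeasurable (Mq + Ch')
      (fun v => (norm_sub_le _ _).trans (add_le_add (hbq v) (hbh' v)))).norm)
  rw [← integral_sub i1 i2]
  calc ‖∫ v, (p v * q v * F₂ v - h v * h' v * F₂ v) ∂μ‖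
      ≤ ∫ v, ‖p v * q v * F₂ v - h v * h' v * F₂ v‖ ∂μ := norm_integral_le_integral_norm _
    _ ≤ ∫ v, (Mq * K * ‖p v - h v‖ + Kh * K * ‖q v - h' v‖) ∂μ := by
        refine integral_mono (i1.sub i2).norm
          ((iph.const_mul _).add (iqh.const_mul _)) fun v => ?_
        have key : p v * q v * F₂ v - h v * h' v * F₂ v =
            (p v - h v) * q v * F₂ v + h v * (q v - h' v) * F₂ v := by ring
        rw [key]
        refine (norm_add_le _ _).trans ?_
        rw [norm_mul, norm_mul, norm_mul, norm_mul]
        have b1 : ‖p v - h v‖ * ‖q v‖ * ‖F₂ v‖ ≤ Mq * K * ‖p v - h v‖ :=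
          (tri_bound (norm_nonneg _) (norm_nonneg _) (norm_nonneg _)
            le_rfl (hbq v) (hbF₂ v)).trans_eq (by ring)
        have b2 : ‖h v‖ * ‖q v - h' v‖ * ‖F₂ v‖ ≤ Kh * K * ‖q v - h' v‖ :=
          (tri_bound (norm_nonneg _) (norm_nonneg _) (norm_nonneg _)
            (hbh v) le_rfl (hbF₂ v)).trans_eq (by ring)
        linarith
    _ = Mq * K * ∫ v, ‖p v - h v‖ ∂μ + Kh * K * ∫ v, ‖q v - h' v‖ ∂μ := by
        rw [integral_add (iph.const_mul _) (iqh.const_mul _), integral_const_mul,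
          integral_const_mul]
open Filter in
theorem tendsto_tensor
    {V W Z : Type*}
    [TopologicalSpace V] [CompactSpace V] [T2Space V] [SecondCountableTopology V]
    [MeasurableSpace V] [BorelSpace V]
    [TopologicalSpace W]
    [TopologicalSpace Z] [CompactSpace Z] [MeasurableSpace Z] [BorelSpace Z]
    (μ : W → Measure V) (hprob : ∀ w : W, IsProbabilityMeasure (μ w))
    (hcont : ∀ F : C(V, ℂ), Continuous fun w : W => ∫ v, F v ∂(μ w))
    (wn : ℕ → W) (w₀ : W) (hw : Tendsto wn atTop (nhds w₀))
    (fn : ℕ → V → Z) (hfn : ∀ n, Measurable (fn n)) (f : V → Z) (hf : Measurable f)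
    (gn : ℕ → V → Z) (hgn : ∀ n, Measurable (gn n)) (g : V → Z) (hg : Measurable g)
    (hF : ∀ (F₁ : C(Z, ℂ)) (F₂ : C(V, ℂ)),
      Tendsto (fun n => ∫ v, F₁ (fn n v) * F₂ v ∂(μ (wn n))) atTop
        (nhds (∫ v, F₁ (f v) * F₂ v ∂(μ w₀))))
    (hG : ∀ (F₁ : C(Z, ℂ)) (F₂ : C(V, ℂ)),
      Tendsto (fun n => ∫ v, F₁ (gn n v) * F₂ v ∂(μ (wn n))) atTop
        (nhds (∫ v, F₁ (g v) * F₂ v ∂(μ w₀))))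
    (G H : C(Z, ℂ)) (F₂ : C(V, ℂ)) :
    Tendsto (fun n => ∫ v, G (fn n v) * H (gn n v) * F₂ v ∂(μ (wn n))) atTop
      (nhds (∫ v, G (f v) * H (g v) * F₂ v ∂(μ w₀))) := by
  haveI := fun w => hprob w
  rw [Metric.tendsto_nhds]
  intro ε hε
  obtain ⟨M', hM'⟩ : ∃ x : ℝ, x = ‖H‖ + 1 := ⟨_, rfl⟩
  obtain ⟨K, hK⟩ : ∃ x : ℝ, x = ‖F₂‖ + 1 := ⟨_, rfl⟩
  have hM'pos : 0 < M' := by rw [hM']; positivity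
  have hKpos : 0 < K := by rw [hK]; positivity
  obtain ⟨δ₁, hδ₁⟩ : ∃ x : ℝ, x = ε / (20 * (M' * K)) := ⟨_, rfl⟩
  have hδ₁pos : 0 < δ₁ := by rw [hδ₁]; positivity
  -- choose h approximating G ∘ f in L²(μ w₀)
  have mem1 : MemLp (fun v => G (f v)) (ENNReal.ofReal 2) (μ w₀) :=
    (memLp_top_of_bound (G.continuous.measurable.comp hf).aestronglyMeasurable ‖G‖
      (Filter.Eventually.of_forall fun v => G.norm_coe_le_norm (f v))).mono_exponent
      le_top
  have rpow_two : ∀ x : ℝ, x ^ (2 : ℝ) = x ^ 2 := fun x => by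
    rw [show (2 : ℝ) = ((2 : ℕ) : ℝ) by norm_num, Real.rpow_natCast]
  obtain ⟨h, hh_int, -⟩ :=
    mem1.exists_boundedContinuous_integral_rpow_sub_le two_pos (ε := δ₁ ^ 2) (by positivity)
  simp only [rpow_two] at hh_int
  obtain ⟨Kh, hKh⟩ : ∃ x : ℝ, x = ‖h‖ + 1 := ⟨_, rfl⟩
  have hKhpos : 0 < Kh := by rw [hKh]; positivity
  obtain ⟨δ₂, hδ₂⟩ : ∃ x : ℝ, x = ε / (20 * (Kh * K)) := ⟨_, rfl⟩
  have hδ₂pos : 0 < δ₂ := by rw [hδ₂]; positivity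
  -- choose h' approximating H ∘ g in L²(μ w₀)
  have mem2 : MemLp (fun v => H (g v)) (ENNReal.ofReal 2) (μ w₀) :=
    (memLp_top_of_bound (H.continuous.measurable.comp hg).aestronglyMeasurable ‖H‖
      (Filter.Eventually.of_forall fun v => H.norm_coe_le_norm (g v))).mono_exponent
      le_top
  obtain ⟨h', hh'_int, -⟩ :=
    mem2.exists_boundedContinuous_integral_rpow_sub_le two_pos (ε := δ₂ ^ 2) (by positivity)
  simp only [rpow_two] at hh'_int
  -- squared-norm limits
  have Rf : Tendsto (fun n => ∫ v, ‖G (fn n v) - h v‖ ^ 2 ∂(μ (wn n))) atTop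
      (nhds (∫ v, ‖G (f v) - h v‖ ^ 2 ∂(μ w₀))) :=
    tendsto_integral_normSq μ hprob hcont wn w₀ hw fn hfn f hf hF G h.toContinuousMap
  have Rg : Tendsto (fun n => ∫ v, ‖H (gn n v) - h' v‖ ^ 2 ∂(μ (wn n))) atTop
      (nhds (∫ v, ‖H (g v) - h' v‖ ^ 2 ∂(μ w₀))) :=
    tendsto_integral_normSq μ hprob hcont wn w₀ hw gn hgn g hg hG H h'.toContinuousMap
  have Ef : ∀ᶠ n in atTop, ∫ v, ‖G (fn n v) - h v‖ ^ 2 ∂(μ (wn n)) < 2 * δ₁ ^ 2 :=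
    Rf.eventually_lt_const (by nlinarith)
  have Eg : ∀ᶠ n in atTop, ∫ v, ‖H (gn n v) - h' v‖ ^ 2 ∂(μ (wn n)) < 2 * δ₂ ^ 2 :=
    Rg.eventually_lt_const (by nlinarith)
  -- the middle integral
  have Jt : Tendsto (fun n => ∫ v, h v * h' v * F₂ v ∂(μ (wn n))) atTop
      (nhds (∫ v, h v * h' v * F₂ v ∂(μ w₀))) :=
    ((hcont ⟨fun v => h v * h' v * F₂ v,
      (h.continuous.mul h'.continuous).mul F₂.continuous⟩).tendsto w₀).comp hw
  have EJ : ∀ᶠ n in atTop, dist (∫ v, h v * h' v * F₂ v ∂(μ (wn n)))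
      (∫ v, h v * h' v * F₂ v ∂(μ w₀)) < ε / 4 :=
    Jt (Metric.ball_mem_nhds _ (by positivity))
  -- bounds used repeatedly
  have hbG : ∀ (u : V → Z) (v : V), ‖G (u v)‖ ≤ ‖G‖ := fun u v => G.norm_coe_le_norm (u v)
  have hbH : ∀ (u : V → Z) (v : V), ‖H (u v)‖ ≤ M' := fun u v =>
    (H.norm_coe_le_norm (u v)).trans (by rw [hM']; linarith)
  have hbh : ∀ v, ‖h v‖ ≤ Kh := fun v => (h.norm_coe_le_norm v).trans (by rw [hKh]; linarith)
  have hbh' : ∀ v, ‖h' v‖ ≤ ‖h'‖ := fun v => h'.norm_coe_le_norm v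
  have hbF₂ : ∀ v, ‖F₂ v‖ ≤ K := fun v => (F₂.norm_coe_le_norm v).trans (by rw [hK]; linarith)
  have e1 : M' * K * δ₁ = ε / 20 := by
    rw [hδ₁]; field_simp
  have e2 : Kh * K * δ₂ = ε / 20 := by
    rw [hδ₂]; field_simp
  -- a_∞ and b_∞ bounds
  have a_inf : ∫ v, ‖G (f v) - h v‖ ∂(μ w₀) ≤ δ₁ := by
    have := integral_norm_le_amgm (μ w₀) (fun v => G (f v) - h v)
      ((G.continuous.measurable.comp hf).sub h.continuous.measurable).aestronglyMeasurable
      (‖G‖ + Kh) (fun v => (norm_sub_le _ _).trans (add_le_add (hbG f v) (hbh v))) hδ₁pos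
    have harith : δ₁ / 2 + (∫ v, ‖G (f v) - h v‖ ^ 2 ∂(μ w₀)) / (2 * δ₁) ≤ δ₁ := by
      have : (∫ v, ‖G (f v) - h v‖ ^ 2 ∂(μ w₀)) / (2 * δ₁) ≤ δ₁ ^ 2 / (2 * δ₁) := by
        gcongr
      have e : δ₁ ^ 2 / (2 * δ₁) = δ₁ / 2 := by field_simp
      linarith [this, e.symm.le]
    linarith
  have b_inf : ∫ v, ‖H (g v) - h' v‖ ∂(μ w₀) ≤ δ₂ := by
    have := integral_norm_le_amgm (μ w₀) (fun v => H (g v) - h' v)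
      ((H.continuous.measurable.comp hg).sub h'.continuous.measurable).aestronglyMeasurable
      (M' + ‖h'‖) (fun v => (norm_sub_le _ _).trans (add_le_add (hbH g v) (hbh' v))) hδ₂pos
    have harith : δ₂ / 2 + (∫ v, ‖H (g v) - h' v‖ ^ 2 ∂(μ w₀)) / (2 * δ₂) ≤ δ₂ := by
      have : (∫ v, ‖H (g v) - h' v‖ ^ 2 ∂(μ w₀)) / (2 * δ₂) ≤ δ₂ ^ 2 / (2 * δ₂) := by
        gcongr
      have e : δ₂ ^ 2 / (2 * δ₂) = δ₂ / 2 := by field_simp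
      linarith [this, e.symm.le]
    linarith
  have d_inf : dist (∫ v, h v * h' v * F₂ v ∂(μ w₀))
      (∫ v, G (f v) * H (g v) * F₂ v ∂(μ w₀)) ≤ ε / 10 := by
    rw [dist_comm, dist_eq_norm]
    have := norm_integral_diff_le (μ w₀) (fun v => G (f v)) (fun v => H (g v))
      (fun v => h v) (fun v => h' v) (fun v => F₂ v)
      (G.continuous.measurable.comp hf) (H.continuous.measurable.comp hg)
      h.continuous.measurable h'.continuous.measurable F₂.continuous.measurable
      ‖G‖ M' Kh ‖h'‖ K (hbG f) (hbH g) hbh hbh' hbF₂ hM'pos.le hKhpos.le hKpos.le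
    beta_reduce at this
    have B1 : M' * K * ∫ v, ‖G (f v) - h v‖ ∂(μ w₀) ≤ ε / 20 := by
      calc M' * K * ∫ v, ‖G (f v) - h v‖ ∂(μ w₀) ≤ M' * K * δ₁ := by
            exact mul_le_mul_of_nonneg_left a_inf (by positivity)
        _ = ε / 20 := e1
    have B2 : Kh * K * ∫ v, ‖H (g v) - h' v‖ ∂(μ w₀) ≤ ε / 20 := by
      calc Kh * K * ∫ v, ‖H (g v) - h' v‖ ∂(μ w₀) ≤ Kh * K * δ₂ := by
            exact mul_le_mul_of_nonneg_left b_inf (by positivity)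
        _ = ε / 20 := e2
    linarith
  -- main eventual bound
  filter_upwards [Ef, Eg, EJ] with n hf1 hg1 hJ
  have a_n : ∫ v, ‖G (fn n v) - h v‖ ∂(μ (wn n)) ≤ 3 / 2 * δ₁ := by
    have := integral_norm_le_amgm (μ (wn n)) (fun v => G (fn n v) - h v)
      ((G.continuous.measurable.comp (hfn n)).sub
        h.continuous.measurable).aestronglyMeasurable
      (‖G‖ + Kh) (fun v => (norm_sub_le _ _).trans (add_le_add (hbG (fn n) v) (hbh v))) hδ₁pos
    have harith : (∫ v, ‖G (fn n v) - h v‖ ^ 2 ∂(μ (wn n))) / (2 * δ₁) ≤ δ₁ := by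
      rw [div_le_iff₀ (by positivity)]
      nlinarith
    linarith
  have b_n : ∫ v, ‖H (gn n v) - h' v‖ ∂(μ (wn n)) ≤ 3 / 2 * δ₂ := by
    have := integral_norm_le_amgm (μ (wn n)) (fun v => H (gn n v) - h' v)
      ((H.continuous.measurable.comp (hgn n)).sub
        h'.continuous.measurable).aestronglyMeasurable
      (M' + ‖h'‖) (fun v => (norm_sub_le _ _).trans (add_le_add (hbH (gn n) v) (hbh' v)))
      hδ₂pos
    have harith : (∫ v, ‖H (gn n v) - h' v‖ ^ 2 ∂(μ (wn n))) / (2 * δ₂) ≤ δ₂ := by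
      rw [div_le_iff₀ (by positivity)]
      nlinarith
    linarith
  have d_n : dist (∫ v, G (fn n v) * H (gn n v) * F₂ v ∂(μ (wn n)))
      (∫ v, h v * h' v * F₂ v ∂(μ (wn n))) ≤ 3 / 40 * ε + 3 / 40 * ε := by
    rw [dist_eq_norm]
    have := norm_integral_diff_le (μ (wn n)) (fun v => G (fn n v)) (fun v => H (gn n v))
      (fun v => h v) (fun v => h' v) (fun v => F₂ v)
      (G.continuous.measurable.comp (hfn n)) (H.continuous.measurable.comp (hgn n))
      h.continuous.measurable h'.continuous.measurable F₂.continuous.measurable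
      ‖G‖ M' Kh ‖h'‖ K (hbG (fn n)) (hbH (gn n)) hbh hbh' hbF₂ hM'pos.le hKhpos.le hKpos.le
    beta_reduce at this
    have B1 : M' * K * ∫ v, ‖G (fn n v) - h v‖ ∂(μ (wn n)) ≤ 3 / 40 * ε := by
      calc M' * K * ∫ v, ‖G (fn n v) - h v‖ ∂(μ (wn n)) ≤ M' * K * (3 / 2 * δ₁) :=
            mul_le_mul_of_nonneg_left a_n (by positivity)
        _ = 3 / 2 * (M' * K * δ₁) := by ring
        _ = 3 / 40 * ε := by rw [e1]; ring
    have B2 : Kh * K * ∫ v, ‖H (gn n v) - h' v‖ ∂(μ (wn n)) ≤ 3 / 40 * ε := by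
      calc Kh * K * ∫ v, ‖H (gn n v) - h' v‖ ∂(μ (wn n)) ≤ Kh * K * (3 / 2 * δ₂) :=
            mul_le_mul_of_nonneg_left b_n (by positivity)
        _ = 3 / 2 * (Kh * K * δ₂) := by ring
        _ = 3 / 40 * ε := by rw [e2]; ring
    linarith
  calc dist (∫ v, G (fn n v) * H (gn n v) * F₂ v ∂(μ (wn n)))
        (∫ v, G (f v) * H (g v) * F₂ v ∂(μ w₀))
      ≤ dist (∫ v, G (fn n v) * H (gn n v) * F₂ v ∂(μ (wn n)))
          (∫ v, h v * h' v * F₂ v ∂(μ (wn n)))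
        + dist (∫ v, h v * h' v * F₂ v ∂(μ (wn n))) (∫ v, h v * h' v * F₂ v ∂(μ w₀))
        + dist (∫ v, h v * h' v * F₂ v ∂(μ w₀))
            (∫ v, G (f v) * H (g v) * F₂ v ∂(μ w₀)) := dist_triangle4 _ _ _ _
    _ < ε := by linarith
open Pointwise in
/-- The set of "tensor" functions `(z₁, z₂) ↦ G z₁ * H z₂` in `C(Z × Z, ℂ)`. -/
def tensorSet (Z : Type*) [TopologicalSpace Z] : Set C(Z × Z, ℂ) :=
  {F | ∃ G H : C(Z, ℂ),
    F = G.comp ⟨Prod.fst, continuous_fst⟩ * H.comp ⟨Prod.snd, continuous_snd⟩}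

open Pointwise in
theorem tensor_dense {Z : Type*} [TopologicalSpace Z] [CompactSpace Z] [T2Space Z]
    (F : C(Z × Z, ℂ)) :
    F ∈ closure (Submodule.span ℂ (tensorSet Z) : Set C(Z × Z, ℂ)) := by
  have hone : (1 : C(Z × Z, ℂ)) ∈ tensorSet Z := ⟨1, 1, by ext x; simp⟩
  have hTT : tensorSet Z * tensorSet Z ⊆ tensorSet Z := by
    rintro z hz
    rw [Set.mem_mul] at hz
    obtain ⟨x, ⟨G, H, rfl⟩, y, ⟨G', H', rfl⟩, rfl⟩ := hz
    exact ⟨G * G', H * H', by ext p; simp; ring⟩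
  have hmul : ∀ a ∈ Submodule.span ℂ (tensorSet Z), ∀ b ∈ Submodule.span ℂ (tensorSet Z),
      a * b ∈ Submodule.span ℂ (tensorSet Z) := by
    intro a ha b hb
    have := Submodule.mul_mem_mul ha hb
    rw [Submodule.span_mul_span] at this
    exact Submodule.span_le.mpr (fun x hx => Submodule.subset_span (hTT hx)) this
  have hstar : ∀ a ∈ Submodule.span ℂ (tensorSet Z),
      star a ∈ Submodule.span ℂ (tensorSet Z) := by
    intro a ha
    induction ha using Submodule.span_induction with
    | mem x hx =>
        obtain ⟨G, H, rfl⟩ := hx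
        exact Submodule.subset_span ⟨star G, star H, by ext p; simp⟩
    | zero => simpa using Submodule.zero_mem _
    | add x y _ _ hx hy => rw [star_add]; exact Submodule.add_mem _ hx hy
    | smul c x _ hx => rw [star_smul]; exact Submodule.smul_mem _ _ hx
  have hadj : ∀ a ∈ StarAlgebra.adjoin ℂ (tensorSet Z),
      a ∈ Submodule.span ℂ (tensorSet Z) := by
    intro a ha
    induction ha using StarAlgebra.adjoin_induction with
    | mem x hx => exact Submodule.subset_span hx
    | algebraMap r =>
        rw [Algebra.algebraMap_eq_smul_one]
        exact Submodule.smul_mem _ _ (Submodule.subset_span hone)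
    | add x y _ _ hx hy => exact Submodule.add_mem _ hx hy
    | mul x y hx' hy' hx hy => exact hmul x hx y hy
    | star x _ hx => exact hstar x hx
  have hsep : (StarAlgebra.adjoin ℂ (tensorSet Z)).SeparatesPoints := by
    intro x y hxy
    have : x.1 ≠ y.1 ∨ x.2 ≠ y.2 := by
      by_contra hc
      push_neg at hc
      exact hxy (Prod.ext hc.1 hc.2)
    rcases this with hne | hne
    · obtain ⟨φ, hφ0, hφ1, -⟩ := exists_continuous_zero_one_of_isClosed
        (isClosed_singleton (x := x.1)) (isClosed_singleton (x := y.1))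
        (by simpa [Set.disjoint_singleton] using hne)
      refine ⟨_, ⟨(⟨fun z => ((φ z : ℝ) : ℂ), Complex.continuous_ofReal.comp φ.continuous⟩ :
        C(Z, ℂ)).comp ⟨Prod.fst, continuous_fst⟩ * (1 : C(Z, ℂ)).comp ⟨Prod.snd, continuous_snd⟩,
        StarAlgebra.subset_adjoin ℂ _ ⟨_, 1, rfl⟩, rfl⟩, ?_⟩
      simp [hφ0 (Set.mem_singleton _), hφ1 (Set.mem_singleton _)]
    · obtain ⟨φ, hφ0, hφ1, -⟩ := exists_continuous_zero_one_of_isClosed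
        (isClosed_singleton (x := x.2)) (isClosed_singleton (x := y.2))
        (by simpa [Set.disjoint_singleton] using hne)
      refine ⟨_, ⟨(1 : C(Z, ℂ)).comp ⟨Prod.fst, continuous_fst⟩ *
        (⟨fun z => ((φ z : ℝ) : ℂ), Complex.continuous_ofReal.comp φ.continuous⟩ :
        C(Z, ℂ)).comp ⟨Prod.snd, continuous_snd⟩,
        StarAlgebra.subset_adjoin ℂ _ ⟨1, _, rfl⟩, rfl⟩, ?_⟩
      simp [hφ0 (Set.mem_singleton _), hφ1 (Set.mem_singleton _)]
  have htop := ContinuousMap.starSubalgebra_topologicalClosure_eq_top_of_separatesPoints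
    (StarAlgebra.adjoin ℂ (tensorSet Z)) hsep
  have hF : F ∈ (StarAlgebra.adjoin ℂ (tensorSet Z)).topologicalClosure := by
    rw [htop]; trivial
  have : F ∈ closure ((StarAlgebra.adjoin ℂ (tensorSet Z)) : Set C(Z × Z, ℂ)) := hF
  exact closure_mono (fun a ha => hadj a ha) this
open Filter in
/-- Let `V, W, Z` be compact (Hausdorff, second-countable) spaces and
`{μ w : w ∈ W}` a CSM of strictly positive Borel probability measures on a continuous map
`π : V → W`.  Suppose `fn n, gn n ∈ L(π⁻¹(wn n), Z)` converge in `𝓛(V,Z)` to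
`f, g ∈ L(π⁻¹(w₀), Z)` respectively.  Then the paired functions `v ↦ (fn n v, gn n v)`,
viewed in `𝓛(V, Z × Z)`, converge to `v ↦ (f v, g v)`. -/
theorem stmt8
    {V W Z : Type*}
    [TopologicalSpace V] [CompactSpace V] [T2Space V] [SecondCountableTopology V]
    [MeasurableSpace V] [BorelSpace V]
    [TopologicalSpace W] [CompactSpace W] [T2Space W] [SecondCountableTopology W]
    [MeasurableSpace W] [BorelSpace W]
    [TopologicalSpace Z] [CompactSpace Z] [T2Space Z] [SecondCountableTopology Z]
    [MeasurableSpace Z] [BorelSpace Z]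
    (π : V → W) (hπ : Continuous π)
    (μ : W → Measure V)
    (hprob : ∀ w : W, IsProbabilityMeasure (μ w))
    (hconc : ∀ w : W, μ w ((π ⁻¹' ({w} : Set W))ᶜ) = 0)
    (hpos : ∀ (w : W) (U : Set V), IsOpen U → (U ∩ π ⁻¹' ({w} : Set W)).Nonempty → 0 < μ w U)
    (hcont : ∀ f : C(V, ℂ), Continuous fun w : W => ∫ v, f v ∂(μ w))
    (wn : ℕ → W) (w₀ : W)
    (fn gn : ℕ → V → Z) (hfn : ∀ n, Measurable (fn n)) (hgn : ∀ n, Measurable (gn n))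
    (f g : V → Z) (hf : Measurable f) (hg : Measurable g)
    (hconvf : Filter.Tendsto
      (fun n : ℕ => (Quotient.mk (lSetoid V W Z μ) ⟨wn n, fn n, hfn n⟩ : LSpace V W Z μ))
      Filter.atTop
      (@nhds _ (lTop V W Z μ) (Quotient.mk (lSetoid V W Z μ) ⟨w₀, f, hf⟩)))
    (hconvg : Filter.Tendsto
      (fun n : ℕ => (Quotient.mk (lSetoid V W Z μ) ⟨wn n, gn n, hgn n⟩ : LSpace V W Z μ))
      Filter.atTop
      (@nhds _ (lTop V W Z μ) (Quotient.mk (lSetoid V W Z μ) ⟨w₀, g, hg⟩))) :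
    Filter.Tendsto
      (fun n : ℕ => (Quotient.mk (lSetoid V W (Z × Z) μ)
          ⟨wn n, fun v => (fn n v, gn n v), (hfn n).prodMk (hgn n)⟩ : LSpace V W (Z × Z) μ))
      Filter.atTop
      (@nhds _ (lTop V W (Z × Z) μ)
        (Quotient.mk (lSetoid V W (Z × Z) μ) ⟨w₀, fun v => (f v, g v), hf.prodMk hg⟩)) := by
  replace hconvf := (lTendsto_iff μ _ _).1 hconvf
  replace hconvg := (lTendsto_iff μ _ _).1 hconvg
  refine (lTendsto_iff μ _ _).2 ?_
  have hF : ∀ (F₁ : C(Z, ℂ)) (F₂ : C(V, ℂ)),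
      Tendsto (fun n => ∫ v, F₁ (fn n v) * F₂ v ∂(μ (wn n))) atTop
        (nhds (∫ v, F₁ (f v) * F₂ v ∂(μ w₀))) := fun F₁ F₂ => hconvf F₁ F₂
  have hG : ∀ (F₁ : C(Z, ℂ)) (F₂ : C(V, ℂ)),
      Tendsto (fun n => ∫ v, F₁ (gn n v) * F₂ v ∂(μ (wn n))) atTop
        (nhds (∫ v, F₁ (g v) * F₂ v ∂(μ w₀))) := fun F₁ F₂ => hconvg F₁ F₂
  -- the base points converge
  have hw : Tendsto wn atTop (nhds w₀) := by
    apply tendsto_of_continuous_tendsto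
    intro φ
    have key : ∀ (w : W) (u : V → Z),
        ∫ v, (1 : C(Z, ℂ)) (u v) * ((φ (π v) : ℝ) : ℂ) ∂(μ w) = ((φ w : ℝ) : ℂ) := by
      intro w u
      simp only [ContinuousMap.one_apply, one_mul]
      exact integral_comp_proj π μ hprob hconc (fun w' => ((φ w' : ℝ) : ℂ)) w
    have h1 := hF 1 ⟨fun v => ((φ (π v) : ℝ) : ℂ),
      Complex.continuous_ofReal.comp (φ.continuous.comp hπ)⟩
    simp only [ContinuousMap.coe_mk] at h1
    rw [show (fun n => ∫ v, (1 : C(Z, ℂ)) (fn n v) * ((φ (π v) : ℝ) : ℂ) ∂(μ (wn n)))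
        = fun n => ((φ (wn n) : ℝ) : ℂ) from funext fun n => key (wn n) (fn n),
      key w₀ f] at h1
    have h2 := (Complex.continuous_re.tendsto _).comp h1
    simpa [Function.comp_def] using h2
  -- integrability helper
  have int_all : ∀ (A : C(Z × Z, ℂ)) (F₂ : C(V, ℂ)) (w : W) (u : V → Z × Z),
      Measurable u → Integrable (fun v => A (u v) * F₂ v) (μ w) := by
    intro A F₂ w u hu
    haveI := hprob w
    exact integrable_of_bdd
      ((A.continuous.measurable.comp hu).mul F₂.continuous.measurable).aestronglyMeasurable
      (‖A‖ * ‖F₂‖) (fun v => by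
        rw [norm_mul]
        exact mul_le_mul (A.norm_coe_le_norm _) (F₂.norm_coe_le_norm _) (norm_nonneg _)
          (norm_nonneg A))
  -- the set of good test functions is a closed submodule containing the tensors
  let S : Submodule ℂ C(Z × Z, ℂ) :=
    { carrier := {F : C(Z × Z, ℂ) | ∀ F₂ : C(V, ℂ),
        Tendsto (fun n => ∫ v, F (fn n v, gn n v) * F₂ v ∂(μ (wn n))) atTop
          (nhds (∫ v, F (f v, g v) * F₂ v ∂(μ w₀)))}
      zero_mem' := by
        intro F₂
        simp only [ContinuousMap.zero_apply, zero_mul, integral_zero]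
        exact tendsto_const_nhds
      add_mem' := by
        intro A B ha hb F₂
        have hsplit : ∀ (w : W) (u : V → Z × Z), Measurable u →
            ∫ v, (A + B) (u v) * F₂ v ∂(μ w)
              = (∫ v, A (u v) * F₂ v ∂(μ w)) + ∫ v, B (u v) * F₂ v ∂(μ w) := by
          intro w u hu
          haveI := hprob w
          rw [← integral_add (int_all A F₂ w u hu) (int_all B F₂ w u hu)]
          refine integral_congr_ae (Filter.Eventually.of_forall fun v => ?_)
          simp [add_mul]
        rw [show (fun n => ∫ v, (A + B) (fn n v, gn n v) * F₂ v ∂(μ (wn n)))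
            = fun n => (∫ v, A (fn n v, gn n v) * F₂ v ∂(μ (wn n)))
              + ∫ v, B (fn n v, gn n v) * F₂ v ∂(μ (wn n)) from
          funext fun n => hsplit (wn n) _ ((hfn n).prodMk (hgn n)),
          hsplit w₀ _ (hf.prodMk hg)]
        exact (ha F₂).add (hb F₂)
      smul_mem' := by
        intro c A ha F₂
        have hs : ∀ (w : W) (u : V → Z × Z),
            ∫ v, (c • A) (u v) * F₂ v ∂(μ w) = c * ∫ v, A (u v) * F₂ v ∂(μ w) := by
          intro w u
          rw [← integral_const_mul]
          refine integral_congr_ae (Filter.Eventually.of_forall fun v => ?_)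
          simp [mul_assoc]
        rw [show (fun n => ∫ v, (c • A) (fn n v, gn n v) * F₂ v ∂(μ (wn n)))
            = fun n => c * ∫ v, A (fn n v, gn n v) * F₂ v ∂(μ (wn n)) from
          funext fun n => hs (wn n) _, hs w₀ _]
        exact (ha F₂).const_mul c }
  have htensor : tensorSet Z ⊆ (S : Set C(Z × Z, ℂ)) := by
    rintro _ ⟨G, H, rfl⟩ F₂
    have := tendsto_tensor μ hprob hcont wn w₀ hw fn hfn f hf gn hgn g hg hF hG G H F₂
    simpa [ContinuousMap.mul_apply, ContinuousMap.comp_apply, ContinuousMap.coe_mk] using this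
  have hclosed : IsClosed (S : Set C(Z × Z, ℂ)) := by
    refine isClosed_of_closure_subset ?_
    intro F hFc F₂
    rw [Metric.tendsto_nhds]
    intro ε hε
    obtain ⟨F', hF'mem, hdist⟩ := Metric.mem_closure_iff.mp hFc (ε / (3 * (‖F₂‖ + 1)))
      (by positivity)
    have hBlt : dist F F' * (‖F₂‖ + 1) < ε / 3 := by
      have := mul_lt_mul_of_pos_right hdist (show (0:ℝ) < ‖F₂‖ + 1 by positivity)
      calc dist F F' * (‖F₂‖ + 1) < ε / (3 * (‖F₂‖ + 1)) * (‖F₂‖ + 1) := this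
        _ = ε / 3 := by field_simp
    have key : ∀ (w : W) (u : V → Z × Z), Measurable u →
        dist (∫ v, F (u v) * F₂ v ∂(μ w)) (∫ v, F' (u v) * F₂ v ∂(μ w))
          ≤ dist F F' * (‖F₂‖ + 1) := by
      intro w u hu
      haveI := hprob w
      rw [dist_eq_norm, ← integral_sub (int_all F F₂ w u hu) (int_all F' F₂ w u hu)]
      refine (norm_integral_le_of_norm_le_const (C := dist F F' * (‖F₂‖ + 1)) ?_).trans ?_
      · refine Filter.Eventually.of_forall fun v => ?_
        have e : ‖F (u v) * F₂ v - F' (u v) * F₂ v‖ = ‖F (u v) - F' (u v)‖ * ‖F₂ v‖ := by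
          rw [← sub_mul, norm_mul]
        rw [e]
        refine mul_le_mul ?_ ((F₂.norm_coe_le_norm v).trans (by linarith)) (norm_nonneg _)
          dist_nonneg
        calc ‖F (u v) - F' (u v)‖ = dist (F (u v)) (F' (u v)) := (dist_eq_norm _ _).symm
          _ ≤ dist F F' := ContinuousMap.dist_apply_le_dist _
      · rw [probReal_univ]
        simp
    have hev := hF'mem F₂
    rw [Metric.tendsto_nhds] at hev
    filter_upwards [hev (ε / 3) (by positivity)] with n hn
    have k1 := key (wn n) _ ((hfn n).prodMk (hgn n))
    have k2 := key w₀ _ (hf.prodMk hg)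
    calc dist (∫ v, F (fn n v, gn n v) * F₂ v ∂(μ (wn n))) (∫ v, F (f v, g v) * F₂ v ∂(μ w₀))
        ≤ dist (∫ v, F (fn n v, gn n v) * F₂ v ∂(μ (wn n)))
            (∫ v, F' (fn n v, gn n v) * F₂ v ∂(μ (wn n)))
          + dist (∫ v, F' (fn n v, gn n v) * F₂ v ∂(μ (wn n)))
              (∫ v, F' (f v, g v) * F₂ v ∂(μ w₀))
          + dist (∫ v, F' (f v, g v) * F₂ v ∂(μ w₀))
              (∫ v, F (f v, g v) * F₂ v ∂(μ w₀)) := dist_triangle4 _ _ _ _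
      _ < ε := by
          have k2' : dist (∫ v, F' (f v, g v) * F₂ v ∂(μ w₀))
              (∫ v, F (f v, g v) * F₂ v ∂(μ w₀)) ≤ dist F F' * (‖F₂‖ + 1) := by
            rw [dist_comm]; exact k2
          linarith
  intro F₁ F₂
  have hmem : F₁ ∈ (S : Set C(Z × Z, ℂ)) :=
    closure_minimal (Submodule.span_le.mpr htensor) hclosed (tensor_dense F₁)
  exact hmem F₂
end

section
/- Let V, W be compact spaces, let A be a compact abelian topological group which is a compact space, and let {μ_w : w ∈ W} be a CSM of strictly positive Borel probability measures on a continuous map π : V → W. Then the map α : A × 𝓛(V,A) → 𝓛(V,A) defined by α(z, f) = (the class of v ↦ f(v) + z) is a free continuous action of A on 𝓛(V,A): α is continuous, α(0,f) = f, α(z+z', f) = α(z, α(z', f)), and α(z,f) = f implies z = 0. -/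
open MeasureTheory

/-- The action of `z : A` on `𝓛(V,A)`, sending (the class of) `f` to the class of
`v ↦ f v + z`. -/
noncomputable def lAct (V W A : Type*) [MeasurableSpace V]
    [AddCommGroup A] [TopologicalSpace A] [IsTopologicalAddGroup A]
    [MeasurableSpace A] [BorelSpace A]
    (μ : W → Measure V) (z : A) : LSpace V W A μ → LSpace V W A μ :=
  Quotient.lift
    (fun f => Quotient.mk (lSetoid V W A μ)
      ⟨f.base, fun v => f.toFun v + z,
        ((continuous_add_right z).measurable).comp f.meas⟩)
    (by
      rintro f g ⟨h1, h2⟩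
      exact Quotient.sound ⟨h1, h2.mono fun v hv => by simp only []; rw [hv]⟩)


theorem lPhi_cont {V W Z : Type*} [TopologicalSpace V] [MeasurableSpace V]
    [TopologicalSpace Z] [MeasurableSpace Z] (μ : W → Measure V)
    (F₁ : C(Z, ℂ)) (F₂ : C(V, ℂ)) :
    @Continuous _ _ (lTop V W Z μ) _ (lPhi V W Z μ F₁ F₂) :=
  continuous_iInf_dom (continuous_iInf_dom continuous_induced_dom)

theorem lIntegrable {V W A : Type*} [TopologicalSpace V] [MeasurableSpace V]
    [OpensMeasurableSpace V] [CompactSpace V]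
    [TopologicalSpace A] [MeasurableSpace A] [OpensMeasurableSpace A] [CompactSpace A]
    (μ : W → Measure V) (hprob : ∀ w : W, IsProbabilityMeasure (μ w))
    (G : C(A, ℂ)) (F₂ : C(V, ℂ)) (r : LRaw V W A) :
    Integrable (fun v => G (r.toFun v) * F₂ v) (μ r.base) := by
  haveI := hprob r.base
  refine Integrable.mono' (integrable_const (‖G‖ * ‖F₂‖)) ?_ (ae_of_all _ fun v => ?_)
  · exact ((G.continuous.measurable.comp r.meas).mul
      F₂.continuous.measurable).aestronglyMeasurable
  · rw [norm_mul]
    exact mul_le_mul (G.norm_coe_le_norm _) (F₂.norm_coe_le_norm _)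
      (norm_nonneg _) (norm_nonneg _)

theorem lPhi_dist_le {V W A : Type*} [TopologicalSpace V] [MeasurableSpace V]
    [OpensMeasurableSpace V] [CompactSpace V]
    [TopologicalSpace A] [MeasurableSpace A] [OpensMeasurableSpace A] [CompactSpace A]
    (μ : W → Measure V) (hprob : ∀ w : W, IsProbabilityMeasure (μ w))
    (G₁ G₂ : C(A, ℂ)) (F₂ : C(V, ℂ)) (f : LSpace V W A μ) :
    dist (lPhi V W A μ G₁ F₂ f) (lPhi V W A μ G₂ F₂ f) ≤ dist G₁ G₂ * ‖F₂‖ := by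
  induction f using Quotient.inductionOn with
  | _ r =>
    haveI := hprob r.base
    show dist (∫ v, G₁ (r.toFun v) * F₂ v ∂(μ r.base))
        (∫ v, G₂ (r.toFun v) * F₂ v ∂(μ r.base)) ≤ _
    rw [dist_eq_norm, ← integral_sub (lIntegrable μ hprob G₁ F₂ r) (lIntegrable μ hprob G₂ F₂ r)]
    have hb : ∀ v, ‖G₁ (r.toFun v) * F₂ v - G₂ (r.toFun v) * F₂ v‖ ≤ dist G₁ G₂ * ‖F₂‖ := by
      intro v
      rw [← sub_mul, norm_mul]
      refine mul_le_mul ?_ (F₂.norm_coe_le_norm _) (norm_nonneg _) dist_nonneg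
      rw [← dist_eq_norm]
      exact ContinuousMap.dist_apply_le_dist _
    have := norm_integral_le_of_norm_le_const (μ := μ r.base) (ae_of_all _ hb)
    simpa using this

/-- Let `V, W` be compact (Hausdorff, second-countable) spaces, `A` a compact
abelian topological group which is a compact space, and `{μ w : w ∈ W}` a CSM of strictly
positive Borel probability measures on a continuous map `π : V → W`.  Then
`α : A × 𝓛(V,A) → 𝓛(V,A)`, `α (z, f) = (v ↦ f v + z)`, is a free continuous action of `A`
on `𝓛(V,A)`. -/
theorem stmt10
    {V W A : Type*}
    [TopologicalSpace V] [CompactSpace V] [T2Space V] [SecondCountableTopology V]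
    [MeasurableSpace V] [BorelSpace V]
    [TopologicalSpace W] [CompactSpace W] [T2Space W] [SecondCountableTopology W]
    [MeasurableSpace W] [BorelSpace W]
    [AddCommGroup A] [TopologicalSpace A] [IsTopologicalAddGroup A]
    [CompactSpace A] [T2Space A] [SecondCountableTopology A]
    [MeasurableSpace A] [BorelSpace A]
    (π : V → W) (hπ : Continuous π)
    (μ : W → Measure V)
    (hprob : ∀ w : W, IsProbabilityMeasure (μ w))
    (hconc : ∀ w : W, μ w ((π ⁻¹' ({w} : Set W))ᶜ) = 0)
    (hpos : ∀ (w : W) (U : Set V), IsOpen U → (U ∩ π ⁻¹' ({w} : Set W)).Nonempty → 0 < μ w U)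
    (hcont : ∀ f : C(V, ℂ), Continuous fun w : W => ∫ v, f v ∂(μ w)) :
    @Continuous (A × LSpace V W A μ) (LSpace V W A μ)
        (@instTopologicalSpaceProd A (LSpace V W A μ) _ (lTop V W A μ)) (lTop V W A μ)
        (fun p => lAct V W A μ p.1 p.2) ∧
    (∀ f : LSpace V W A μ, lAct V W A μ 0 f = f) ∧
    (∀ (z z' : A) (f : LSpace V W A μ),
      lAct V W A μ (z + z') f = lAct V W A μ z (lAct V W A μ z' f)) ∧
    (∀ (z : A) (f : LSpace V W A μ), lAct V W A μ z f = f → z = 0) := by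
  refine ⟨?_, ?_, ?_, ?_⟩
  · -- continuity
    letI : TopologicalSpace (LSpace V W A μ) := lTop V W A μ
    show @Continuous (A × LSpace V W A μ) _ (@instTopologicalSpaceProd A (LSpace V W A μ) _ (lTop V W A μ)) (⨅ (F₁ : C(A, ℂ)) (F₂ : C(V, ℂ)),
        TopologicalSpace.induced (lPhi V W A μ F₁ F₂) inferInstance)
      fun p : A × LSpace V W A μ => lAct V W A μ p.1 p.2
    refine continuous_iInf_rng.mpr fun F₁ => continuous_iInf_rng.mpr fun F₂ =>
      continuous_induced_rng.mpr ?_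
    set K : C(A × A, ℂ) := ⟨fun p => F₁ (p.2 + p.1), by fun_prop⟩ with hK
    have heq : (lPhi V W A μ F₁ F₂ ∘ fun p : A × LSpace V W A μ => lAct V W A μ p.1 p.2)
        = fun p : A × LSpace V W A μ => lPhi V W A μ (K.curry p.1) F₂ p.2 := by
      funext p
      obtain ⟨z, f⟩ := p
      induction f using Quotient.inductionOn with
      | _ r => rfl
    rw [heq]
    rw [continuous_iff_continuousAt]
    rintro ⟨z₀, f₀⟩
    rw [ContinuousAt, Metric.tendsto_nhds]
    intro ε hε
    have h1 : ∀ᶠ z in nhds z₀, dist (K.curry z) (K.curry z₀) * ‖F₂‖ < ε / 2 := by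
      have hc : Filter.Tendsto (fun z => dist (K.curry z) (K.curry z₀) * ‖F₂‖)
          (nhds z₀) (nhds 0) := by
        have := ((K.curry.continuous.tendsto z₀).dist
          (tendsto_const_nhds (x := K.curry z₀))).mul_const ‖F₂‖
        simpa using this
      exact hc.eventually_lt_const (by positivity)
    have h2 : ∀ᶠ f in @nhds _ (lTop V W A μ) f₀,
        dist (lPhi V W A μ (K.curry z₀) F₂ f) (lPhi V W A μ (K.curry z₀) F₂ f₀) < ε / 2 :=
      Metric.tendsto_nhds.mp ((lPhi_cont μ (K.curry z₀) F₂).tendsto f₀) _ (by positivity)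
    rw [nhds_prod_eq]
    filter_upwards [Filter.prod_mem_prod h1 h2] with p hp
    obtain ⟨hp1, hp2⟩ := hp
    calc dist (lPhi V W A μ (K.curry p.1) F₂ p.2) (lPhi V W A μ (K.curry z₀) F₂ f₀)
        ≤ dist (lPhi V W A μ (K.curry p.1) F₂ p.2) (lPhi V W A μ (K.curry z₀) F₂ p.2)
          + dist (lPhi V W A μ (K.curry z₀) F₂ p.2) (lPhi V W A μ (K.curry z₀) F₂ f₀) :=
        dist_triangle _ _ _
      _ < ε / 2 + ε / 2 :=
        add_lt_add (lt_of_le_of_lt (lPhi_dist_le μ hprob _ _ F₂ p.2) hp1) hp2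
      _ = ε := add_halves ε
  · intro f
    induction f using Quotient.inductionOn with
    | _ r => exact Quotient.sound ⟨rfl, ae_of_all _ fun v => add_zero _⟩
  · intro z z' f
    induction f using Quotient.inductionOn with
    | _ r => exact Quotient.sound ⟨rfl, ae_of_all _ fun v => show r.toFun v + (z + z') = r.toFun v + z' + z by
        rw [add_comm z z', ← add_assoc]⟩
  · intro z f h
    induction f using Quotient.inductionOn with
    | _ r =>
      obtain ⟨-, h2⟩ := Quotient.exact h
      haveI := hprob r.base
      haveI : (ae (μ r.base)).NeBot := ae_neBot.mpr (IsProbabilityMeasure.ne_zero _)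
      obtain ⟨v, hv⟩ := h2.exists
      exact add_eq_left.mp hv
end
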